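/- Let H be a minimal solution of a ground ILP task for distinct examples (B, L, ⟨E_1, …, E_n⟩), and suppose that for every i the program B ∪ O_i ∪ H is stratified, with unique stable model M_i. Then every rule r ∈ H has its body satisfied in at least one of the contexts, i.e., for every r ∈ H there exists i ∈ {1, …, n} with pos(r) ⊆ M_i and neg(r) ∩ M_i = ∅. -/
import Mathlib


namespace ASP

/-- A ground normal rule: a head atom, a finite set of positive body atoms,
and a finite set of negated body atoms. -/
structure Rule (α : Type) where
  head : α
  pos : Finset α
  neg : Finset α
deriving DecidableEq

variable {α : Type}

/-- An interpretation `M` satisfies a rule `r` if `head r ∈ M` whenever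
`pos r ⊆ M` and `neg r ∩ M = ∅`. -/
def ruleSat (M : Set α) (r : Rule α) : Prop :=
  ((↑r.pos : Set α) ⊆ M ∧ ∀ a ∈ r.neg, a ∉ M) → r.head ∈ M

/-- `M` is a model of a program if it satisfies every rule. -/
def isModel (M : Set α) (P : Set (Rule α)) : Prop :=
  ∀ r ∈ P, ruleSat M r

/-- A definite program has no negated body atoms. -/
def isDefinite (P : Set (Rule α)) : Prop :=
  ∀ r ∈ P, r.neg = ∅

/-- The reduct `P^M`: the definite program
`{(head r, pos r, ∅) : r ∈ P, neg r ∩ M = ∅}`. -/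
def reduct (P : Set (Rule α)) (M : Set α) : Set (Rule α) :=
  {r' | ∃ r ∈ P, (∀ a ∈ r.neg, a ∉ M) ∧ r' = ⟨r.head, r.pos, ∅⟩}

/-- `M` is the least model of `P`: a model contained in every model of `P`. -/
def isLeastModel (M : Set α) (P : Set (Rule α)) : Prop :=
  isModel M P ∧ ∀ M', isModel M' P → M ⊆ M'

/-- `M` is a stable model (answer set) of `P` if `M` is the least model of
the reduct `P^M`. -/
def isStable (M : Set α) (P : Set (Rule α)) : Prop :=
  isLeastModel M (reduct P M)

/-- A program is stratified if there is a stratification function `s` on atoms. -/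
def isStratified (P : Set (Rule α)) : Prop :=
  ∃ s : α → ℕ, ∀ r ∈ P,
    (∀ a ∈ r.pos, s a ≤ s r.head) ∧ (∀ a ∈ r.neg, s a < s r.head)

/-- `P ⊢ a` : atom `a` belongs to every stable model of `P`. -/
def entails (P : Set (Rule α)) (a : α) : Prop :=
  ∀ M, isStable M P → a ∈ M

/-- `H1 ≤ H2` for finite ground programs: there is an injective map `f` from the
rules of `H1` to the rules of `H2` preserving heads and (weakly) enlarging bodies. -/
def progLE (H1 H2 : Finset (Rule α)) : Prop :=
  ∃ f : Rule α → Rule α, Set.InjOn f ↑H1 ∧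
    ∀ r ∈ H1, f r ∈ H2 ∧ (f r).head = r.head ∧ r.pos ⊆ (f r).pos ∧ r.neg ⊆ (f r).neg

/-- `H1 < H2` iff `H1 ≤ H2` and `H1 ≠ H2`. -/
def progLT (H1 H2 : Finset (Rule α)) : Prop :=
  progLE H1 H2 ∧ H1 ≠ H2

/-- A context-dependent example: an observation program `obs` together with finite
sets of positive and negative example atoms. -/
structure ILPExample (α : Type) where
  obs : Set (Rule α)
  epos : Finset α
  eneg : Finset α

/-- `H` covers example `E` (relative to background `B`): every positive example atom
belongs to every stable model of `B ∪ O ∪ H`, and no negative example atom does. -/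
def covers (B : Set (Rule α)) (H : Finset (Rule α)) (E : ILPExample α) : Prop :=
  (∀ a ∈ E.epos, entails (B ∪ E.obs ∪ ↑H) a) ∧
  (∀ a ∈ E.eneg, ¬ entails (B ∪ E.obs ∪ ↑H) a)

/-- `H` is a solution of the ILP task for distinct examples `(B, L, Es)`. -/
def isSolution (B L : Set (Rule α)) (Es : List (ILPExample α))
    (H : Finset (Rule α)) : Prop :=
  (↑H : Set (Rule α)) ⊆ L ∧ ∀ E ∈ Es, covers B H E

/-- A solution `H` is minimal if no solution `H'` satisfies `H' < H`. -/
def isMinimalSolution (B L : Set (Rule α)) (Es : List (ILPExample α))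
    (H : Finset (Rule α)) : Prop :=
  isSolution B L Es H ∧ ¬∃ H', isSolution B L Es H' ∧ progLT H' H

section Aux

/-- One-step consequence operator for (the positive parts of) a program. -/
def Tstep (P : Set (Rule α)) (X : Set α) : Set α :=
  {a | ∃ r ∈ P, r.head = a ∧ (↑r.pos : Set α) ⊆ X}

/-- Finite stages of the least-fixpoint construction. -/
def stage (P : Set (Rule α)) : ℕ → Set α
  | 0 => ∅
  | n + 1 => Tstep P (stage P n)

/-- The least model (for a definite program) as a union of stages. -/
def lm (P : Set (Rule α)) : Set α := ⋃ n, stage P n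

lemma Tstep_mono {P : Set (Rule α)} {X Y : Set α} (h : X ⊆ Y) :
    Tstep P X ⊆ Tstep P Y := by
  rintro a ⟨r, hr, hh, hp⟩
  exact ⟨r, hr, hh, hp.trans h⟩

lemma stage_mono_prog {P Q : Set (Rule α)} (h : P ⊆ Q) :
    ∀ n, stage P n ⊆ stage Q n
  | 0 => le_refl _
  | n + 1 => by
    rintro a ⟨r, hr, hh, hp⟩
    exact ⟨r, h hr, hh, hp.trans (stage_mono_prog h n)⟩

lemma stage_succ_mono {P : Set (Rule α)} : ∀ n, stage P n ⊆ stage P (n + 1)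
  | 0 => by intro a ha; exact absurd ha (Set.notMem_empty a)
  | n + 1 => Tstep_mono (stage_succ_mono n)

lemma stage_mono {P : Set (Rule α)} : Monotone (stage P) :=
  monotone_nat_of_le_succ stage_succ_mono

lemma stage_subset_lm {P : Set (Rule α)} (n : ℕ) : stage P n ⊆ lm P :=
  Set.subset_iUnion (stage P) n

lemma pos_subset_stage {P : Set (Rule α)} {s : Finset α}
    (h : (↑s : Set α) ⊆ lm P) : ∃ n, (↑s : Set α) ⊆ stage P n := by
  classical
  have h' : ∀ a : α, ∃ n, a ∈ (↑s : Set α) → a ∈ stage P n := by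
    intro a
    by_cases ha : a ∈ (↑s : Set α)
    · obtain ⟨n, hn⟩ := Set.mem_iUnion.mp (h ha)
      exact ⟨n, fun _ => hn⟩
    · exact ⟨0, fun h => absurd h ha⟩
  choose f hf using h'
  refine ⟨s.sup f, fun a ha => ?_⟩
  exact stage_mono (Finset.le_sup (by exact_mod_cast ha)) (hf a ha)

lemma Tstep_lm_subset {P : Set (Rule α)} : Tstep P (lm P) ⊆ lm P := by
  rintro a ⟨r, hr, hh, hp⟩
  obtain ⟨n, hn⟩ := pos_subset_stage hp
  exact stage_subset_lm (n + 1) ⟨r, hr, hh, hn⟩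

lemma lm_isModel {P : Set (Rule α)} (hd : isDefinite P) : isModel (lm P) P := by
  intro r hr hbody
  exact Tstep_lm_subset ⟨r, hr, rfl, hbody.1⟩

lemma stage_subset_model {P : Set (Rule α)} {M : Set α}
    (hd : isDefinite P) (hM : isModel M P) : ∀ n, stage P n ⊆ M
  | 0 => by intro a ha; exact absurd ha (Set.notMem_empty a)
  | n + 1 => by
    rintro a ⟨r, hr, hh, hp⟩
    have := hM r hr ⟨hp.trans (stage_subset_model hd hM n), by simp [hd r hr]⟩
    exact hh ▸ this

lemma lm_subset_model {P : Set (Rule α)} {M : Set α}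
    (hd : isDefinite P) (hM : isModel M P) : lm P ⊆ M :=
  Set.iUnion_subset (stage_subset_model hd hM)

lemma lm_mono_prog {P Q : Set (Rule α)} (h : P ⊆ Q) : lm P ⊆ lm Q :=
  Set.iUnion_subset fun n => (stage_mono_prog h n).trans (stage_subset_lm n)

lemma leastModel_eq_lm {P : Set (Rule α)} {M : Set α}
    (hd : isDefinite P) (h : isLeastModel M P) : M = lm P :=
  subset_antisymm (h.2 _ (lm_isModel hd)) (lm_subset_model hd h.1)

lemma reduct_definite {P : Set (Rule α)} {M : Set α} : isDefinite (reduct P M) := by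
  rintro r' ⟨r, hr, hn, rfl⟩
  rfl

lemma reduct_mono {P Q : Set (Rule α)} {M : Set α} (h : P ⊆ Q) :
    reduct P M ⊆ reduct Q M := by
  rintro r' ⟨r, hr, hn, rfl⟩
  exact ⟨r, h hr, hn, rfl⟩

lemma stable_eq_lm {P : Set (Rule α)} {M : Set α} (h : isStable M P) :
    M = lm (reduct P M) :=
  leastModel_eq_lm reduct_definite h

lemma reduct_congr {P : Set (Rule α)} {M N : Set α}
    (h : ∀ r ∈ P, ∀ a ∈ r.neg, (a ∈ M ↔ a ∈ N)) : reduct P M = reduct P N := by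
  ext r'
  constructor
  · rintro ⟨r, hr, hn, rfl⟩
    exact ⟨r, hr, fun a ha hNa => hn a ha ((h r hr a ha).mpr hNa), rfl⟩
  · rintro ⟨r, hr, hn, rfl⟩
    exact ⟨r, hr, fun a ha hMa => hn a ha ((h r hr a ha).mp hMa), rfl⟩

lemma restrict_mem {P : Set (Rule α)} {s : α → ℕ}
    (hstrat : ∀ r ∈ P, (∀ a ∈ r.pos, s a ≤ s r.head) ∧ (∀ a ∈ r.neg, s a < s r.head))
    {M : Set α} (hM : isStable M P) (k : ℕ) {a : α} (ha : a ∈ M) (hak : s a ≤ k) :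
    a ∈ lm (reduct {r ∈ P | s r.head ≤ k} M) := by
  have hMeq : M = lm (reduct P M) := stable_eq_lm hM
  have key : ∀ n, ∀ b, b ∈ stage (reduct P M) n → s b ≤ k →
      b ∈ lm (reduct {r ∈ P | s r.head ≤ k} M) := by
    intro n
    induction n with
    | zero => intro b hb _; exact absurd hb (Set.notMem_empty b)
    | succ n ih =>
      rintro b ⟨r', hr', hh, hp⟩ hbk
      obtain ⟨r, hrP, hneg, rfl⟩ := hr'
      have hhb : r.head = b := hh
      have hhead : s r.head ≤ k := by rw [hhb]; exact hbk
      have hposlm : (↑r.pos : Set α) ⊆ lm (reduct {r ∈ P | s r.head ≤ k} M) := by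
        intro c hc
        exact ih c (hp hc) (le_trans ((hstrat r hrP).1 c (by exact_mod_cast hc)) hhead)
      exact Tstep_lm_subset ⟨⟨r.head, r.pos, ∅⟩, ⟨r, ⟨hrP, hhead⟩, hneg, rfl⟩, hh, hposlm⟩
  rw [hMeq] at ha
  obtain ⟨n, han⟩ := Set.mem_iUnion.mp ha
  exact key n a han hak

lemma stratified_unique {P : Set (Rule α)} (hs : isStratified P)
    {M N : Set α} (hM : isStable M P) (hN : isStable N P) : M = N := by
  obtain ⟨s, hstrat⟩ := hs
  have main : ∀ k, ∀ a, s a = k → (a ∈ M ↔ a ∈ N) := by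
    intro k
    induction k using Nat.strong_induction_on with
    | _ k IH =>
      intro a hak
      have hred : reduct {r ∈ P | s r.head ≤ k} M = reduct {r ∈ P | s r.head ≤ k} N :=
        reduct_congr fun r hr b hb =>
          IH (s b) (lt_of_lt_of_le ((hstrat r hr.1).2 b hb) hr.2) b rfl
      have hsubM : lm (reduct {r ∈ P | s r.head ≤ k} M) ⊆ M := by
        refine le_trans (lm_mono_prog (reduct_mono ?_)) (le_of_eq (stable_eq_lm hM).symm)
        exact fun r hr => hr.1
      have hsubN : lm (reduct {r ∈ P | s r.head ≤ k} N) ⊆ N := by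
        refine le_trans (lm_mono_prog (reduct_mono ?_)) (le_of_eq (stable_eq_lm hN).symm)
        exact fun r hr => hr.1
      constructor
      · intro haM
        have := restrict_mem hstrat hM k haM (le_of_eq hak)
        rw [hred] at this
        exact hsubN this
      · intro haN
        have := restrict_mem hstrat hN k haN (le_of_eq hak)
        rw [← hred] at this
        exact hsubM this
  ext a
  exact main (s a) a rfl

lemma stable_erase {P P' : Set (Rule α)} {M : Set α} {r : Rule α}
    (hsub : P' ⊆ P) (hdiff : ∀ x ∈ P, x ∉ P' → x = r)
    (hbody : ¬((↑r.pos : Set α) ⊆ M ∧ ∀ a ∈ r.neg, a ∉ M))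
    (hM : isStable M P) : isStable M P' := by
  have hredsub : reduct P' M ⊆ reduct P M := reduct_mono hsub
  have hmodel : isModel M (reduct P' M) := fun q hq => hM.1 q (hredsub hq)
  refine ⟨hmodel, fun M'' hM'' => ?_⟩
  have hlm_sub : lm (reduct P' M) ⊆ M := lm_subset_model reduct_definite hmodel
  have hlm_model : isModel (lm (reduct P' M)) (reduct P M) := by
    rintro q ⟨q0, hq0P, hq0neg, rfl⟩
    by_cases hq0 : q0 ∈ P'
    · exact lm_isModel reduct_definite _ ⟨q0, hq0, hq0neg, rfl⟩
    · have hq0r : q0 = r := hdiff q0 hq0P hq0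
      subst hq0r
      intro hb
      exact absurd ⟨hb.1.trans hlm_sub, hq0neg⟩ hbody
  have hMle : M ⊆ lm (reduct P' M) := hM.2 _ hlm_model
  exact hMle.trans (lm_subset_model reduct_definite hM'')

lemma isStratified_subset {P Q : Set (Rule α)} (h : isStratified P) (hQ : Q ⊆ P) :
    isStratified Q := by
  obtain ⟨s, hs⟩ := h
  exact ⟨s, fun r hr => hs r (hQ hr)⟩

end Aux

/-- If `H` is a minimal solution of the ILP task for distinct
examples `(B, L, Es)` and for every `i` the program `B ∪ O_i ∪ H` is stratified
with unique stable model `M i`, then every rule of `H` has its body satisfied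
in at least one of the contexts `M i`. -/
theorem minimal_solution_rule_body_satisfied_somewhere {α : Type}
    (B L : Set (Rule α)) (Es : List (ILPExample α)) (H : Finset (Rule α))
    (M : Fin Es.length → Set α)
    (hmin : isMinimalSolution B L Es H)
    (hstrat : ∀ i : Fin Es.length, isStratified (B ∪ (Es.get i).obs ∪ ↑H))
    (hstab : ∀ i : Fin Es.length, isStable (M i) (B ∪ (Es.get i).obs ∪ ↑H))
    (huniq : ∀ (i : Fin Es.length) (M' : Set α),
      isStable M' (B ∪ (Es.get i).obs ∪ ↑H) → M' = M i) :
    ∀ r ∈ H, ∃ i : Fin Es.length,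
      (↑r.pos : Set α) ⊆ M i ∧ (∀ a ∈ r.neg, a ∉ M i) := by
  classical
  intro r hr
  by_contra hno
  rw [not_exists] at hno
  have herase_sub : (↑(H.erase r) : Set (Rule α)) ⊆ (↑H : Set (Rule α)) := by
    intro x hx
    exact Finset.erase_subset r H (by exact_mod_cast hx)
  have hsol' : isSolution B L Es (H.erase r) := by
    refine ⟨herase_sub.trans hmin.1.1, fun E hE => ?_⟩
    obtain ⟨i, hi⟩ := List.mem_iff_get.mp hE
    have hstabi : isStable (M i) (B ∪ E.obs ∪ ↑H) := by rw [← hi]; exact hstab i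
    have hstrati : isStratified (B ∪ E.obs ∪ ↑H) := by rw [← hi]; exact hstrat i
    have huniqi : ∀ M', isStable M' (B ∪ E.obs ∪ ↑H) → M' = M i := by
      intro M' hM'
      exact huniq i M' (by rw [hi]; exact hM')
    have hsubP : (B ∪ E.obs ∪ ↑(H.erase r)) ⊆ (B ∪ E.obs ∪ ↑H) :=
      Set.union_subset_union_right _ herase_sub
    have hdiff : ∀ x ∈ (B ∪ E.obs ∪ (↑H : Set (Rule α))),
        x ∉ (B ∪ E.obs ∪ (↑(H.erase r) : Set (Rule α))) → x = r := by
      intro x hx hx'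
      rcases hx with hx | hx
      · exact absurd (Or.inl hx) hx'
      · have hxH : x ∈ H := by exact_mod_cast hx
        by_contra hxr
        exact hx' (Or.inr (by exact_mod_cast Finset.mem_erase.mpr ⟨hxr, hxH⟩))
    have hMstable' : isStable (M i) (B ∪ E.obs ∪ ↑(H.erase r)) :=
      stable_erase hsubP hdiff (hno i) hstabi
    have huniq' : ∀ M'', isStable M'' (B ∪ E.obs ∪ ↑(H.erase r)) → M'' = M i :=
      fun M'' h'' =>
        stratified_unique (isStratified_subset hstrati hsubP) h'' hMstable'
    have hcov : covers B H E := hmin.1.2 E hE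
    constructor
    · intro a ha M'' h''
      rw [huniq' M'' h'']
      exact hcov.1 a ha (M i) hstabi
    · intro a ha hent
      have hnot : ¬ entails (B ∪ E.obs ∪ ↑H) a := hcov.2 a ha
      rw [entails] at hnot
      push_neg at hnot
      obtain ⟨M0, hM0, haM0⟩ := hnot
      have hM0i : M0 = M i := huniqi M0 hM0
      rw [hM0i] at haM0
      exact haM0 (hent (M i) hMstable')
  refine hmin.2 ⟨H.erase r, hsol', ?_, ?_⟩
  · exact ⟨id, Set.injOn_id _, fun q hq =>
      ⟨Finset.erase_subset r H hq, rfl, Finset.Subset.refl _, Finset.Subset.refl _⟩⟩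
  · exact fun h => (Finset.erase_ne_self.mpr hr) h


end ASP
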